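/- (Monotonicity of CR_b/P_s.) Fix an integer n ≥ 1, σ > 0, α ∈ (0,1), and a fixed ν > 0. Define G(θ) = CR_b(θ, ν)/P_s(θ, ν) for θ ≥ 0. Then G is (a) non-decreasing on [0, |ν − z_{α/2}σ/√n|]; (b) strictly increasing on (|ν − z_{α/2}σ/√n|, ν + z_{α/2}σ/√n); and (c) strictly decreasing on [ν + z_{α/2}σ/√n, ∞). -/

import Mathlib

open MeasureTheory ProbabilityTheory

/-- The standard normal cumulative distribution function. -/
noncomputable def Phi (x : ℝ) : ℝ := (gaussianReal 0 1 (Set.Iic x)).toReal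

/-- P_s(θ,ν) = Φ(√n(θ − ν)/σ) + Φ(√n(−θ − ν)/σ). -/
noncomputable def Ps (n : ℕ) (σ θ ν : ℝ) : ℝ :=
  Phi (Real.sqrt n * (θ - ν) / σ) + Phi (Real.sqrt n * (-θ - ν) / σ)

/-- σ̃(θ) = (1 + λ/θ²)⁻¹ σ for θ ≠ 0, with the convention σ̃(0) = 0. -/
noncomputable def sigTilde (lam σ θ : ℝ) : ℝ :=
  if θ = 0 then 0 else (1 + lam / θ ^ 2)⁻¹ * σ

open Classical in
/-- The piecewise function CR_a(θ,ν); here `za` denotes the quantile z_{α/2}. -/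
noncomputable def CRa (n : ℕ) (σ lam za θ ν : ℝ) : ℝ :=
  if θ < |ν - za * sigTilde lam σ θ / Real.sqrt n| then
    (Ps n σ θ ν - 2 * Phi (-(za * sigTilde lam σ θ / σ))) *
      (if ν < za * sigTilde lam σ θ / Real.sqrt n then 1 else 0)
  else if θ ≤ ν + za * sigTilde lam σ θ / Real.sqrt n then
    Phi (za * sigTilde lam σ θ / σ) - Phi (Real.sqrt n * (ν - θ) / σ)
  else 1 - 2 * Phi (-(za * sigTilde lam σ θ / σ))

open Classical in
/-- The piecewise function CR_b(θ,ν); here `za` denotes the quantile z_{α/2}. -/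
noncomputable def CRb (n : ℕ) (σ α za θ ν : ℝ) : ℝ :=
  if θ < |ν - za * σ / Real.sqrt n| then
    (Ps n σ θ ν - α) * (if ν < za * σ / Real.sqrt n then 1 else 0)
  else if θ ≤ ν + za * σ / Real.sqrt n then
    1 - α / 2 - Phi (Real.sqrt n * (ν - θ) / σ)
  else 1 - α

/-!
On `[0, |ν - c|]` (with `c = z_{α/2} σ / √n`) the numerator `CR_b` is either `0` or `P_s - α`, and
on `[ν + c, ∞)` it is the constant `1 - α`, so (a) and (c) reduce to the strict increase of
`P_s(·, ν)` on `[0, ∞)`: `1 - P_s(θ, ν)` is the standard Gaussian mass of an interval of fixed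
length centred at `√n θ / σ`, which decreases as the centre moves away from `0`. On the middle interval
`CR_b = Φ(u) - α/2` with `u = √n (θ - ν) / σ`, and `P_s = (Φ(v) + α/2) + (Φ(u) - α/2)` with
`v = -√n (θ + ν) / σ`; there `b = Φ(u) - α/2 > 0` increases and `a = Φ(v) + α/2 > 0` decreases,
so the ratio `b / (a + b)` increases.
-/

open Real Set

lemma continuous_gaussianPDFReal (μ : ℝ) (v : NNReal) : Continuous (gaussianPDFReal μ v) := by
  unfold gaussianPDFReal
  fun_prop

lemma gaussianPDFReal_zero_neg (v : NNReal) (x : ℝ) :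
    gaussianPDFReal 0 v (-x) = gaussianPDFReal 0 v x := by
  simp only [gaussianPDFReal, sub_zero, neg_sq]

lemma gaussianPDFReal_zero_lt_of_sq_lt {v : NNReal} (hv : v ≠ 0) {a b : ℝ} (h : b ^ 2 < a ^ 2) :
    gaussianPDFReal 0 v a < gaussianPDFReal 0 v b := by
  have hv' : (0 : ℝ) < v := by positivity
  simp only [gaussianPDFReal, sub_zero]
  gcongr ?_ * exp ?_
  rw [neg_div, neg_div, neg_lt_neg_iff]
  gcongr

lemma Phi_eq_integral (x : ℝ) : Phi x = ∫ t in Iic x, gaussianPDFReal 0 1 t := by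
  rw [Phi, gaussianReal_apply_eq_integral 0 one_ne_zero,
    ENNReal.toReal_ofReal (integral_nonneg fun t => gaussianPDFReal_nonneg 0 1 t)]

lemma hasDerivAt_Phi (x : ℝ) : HasDerivAt Phi (gaussianPDFReal 0 1 x) x := by
  have hPhi : Phi = fun y => (∫ t in Iic 0, gaussianPDFReal 0 1 t) +
      ∫ t in (0 : ℝ)..y, gaussianPDFReal 0 1 t := by
    ext y
    rw [Phi_eq_integral, ← intervalIntegral.integral_Iic_sub_Iic
      (integrable_gaussianPDFReal 0 1).integrableOn (integrable_gaussianPDFReal 0 1).integrableOn]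
    ring
  rw [hPhi]
  exact (intervalIntegral.integral_hasDerivAt_right
    (integrable_gaussianPDFReal 0 1).intervalIntegrable
    (continuous_gaussianPDFReal 0 1).stronglyMeasurable.stronglyMeasurableAtFilter
    (continuous_gaussianPDFReal 0 1).continuousAt).const_add _

lemma continuous_Phi : Continuous Phi :=
  continuous_iff_continuousAt.2 fun x => (hasDerivAt_Phi x).continuousAt

lemma Phi_strictMono : StrictMono Phi :=
  strictMono_of_hasDerivAt_pos hasDerivAt_Phi fun x => gaussianPDFReal_pos 0 1 x one_ne_zero

lemma Phi_pos (x : ℝ) : 0 < Phi x :=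
  ENNReal.toReal_nonneg.trans_lt (Phi_strictMono (sub_one_lt x))

lemma Phi_neg (x : ℝ) : Phi (-x) = 1 - Phi x := by
  have hIoi : Phi (-x) = ∫ t in Ioi x, gaussianPDFReal 0 1 t := by
    have := integral_comp_neg_Iic (-x) (gaussianPDFReal 0 1)
    simp only [gaussianPDFReal_zero_neg, neg_neg] at this
    rw [Phi_eq_integral, this]
  rw [hIoi, Phi_eq_integral, eq_sub_iff_add_eq, add_comm,
    intervalIntegral.integral_Iic_add_Ioi (integrable_gaussianPDFReal 0 1).integrableOn
      (integrable_gaussianPDFReal 0 1).integrableOn,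
    integral_gaussianPDFReal_eq_one 0 one_ne_zero]

lemma Phi_zero : Phi 0 = 1 / 2 := by
  linarith [neg_zero (G := ℝ) ▸ Phi_neg 0]

lemma pos_of_Phi_neg_lt_half {z : ℝ} (h : Phi (-z) < 1 / 2) : 0 < z := by
  rw [← Phi_strictMono.lt_iff_lt, Phi_zero]
  linarith [Phi_neg z]

lemma strictAntiOn_Phi_add_sub_Phi_sub {d : ℝ} (hd : 0 < d) :
    StrictAntiOn (fun x => Phi (x + d) - Phi (x - d)) (Ici 0) := by
  refine strictAntiOn_of_deriv_neg (convex_Ici 0)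
    ((continuous_Phi.comp (continuous_add_const d)).sub
      (continuous_Phi.comp (continuous_sub_right d))).continuousOn fun x hx => ?_
  rw [interior_Ici, mem_Ioi] at hx
  have hderiv : HasDerivAt (fun x => Phi (x + d) - Phi (x - d))
      (gaussianPDFReal 0 1 (x + d) - gaussianPDFReal 0 1 (x - d)) x :=
    ((hasDerivAt_Phi _).comp_add_const x d).sub ((hasDerivAt_Phi _).comp_sub_const x d)
  rw [hderiv.deriv, sub_neg]
  exact gaussianPDFReal_zero_lt_of_sq_lt one_ne_zero (by nlinarith)

lemma StrictMonoOn.div_add_of_strictAntiOn {ι 𝕜 : Type*} [Preorder ι] [Field 𝕜] [LinearOrder 𝕜]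
    [IsStrictOrderedRing 𝕜] {f g : ι → 𝕜} {s : Set ι} (hf : StrictMonoOn f s)
    (hg : StrictAntiOn g s) (hf0 : ∀ x ∈ s, 0 ≤ f x) (hg0 : ∀ x ∈ s, 0 < g x) :
    StrictMonoOn (fun x => f x / (g x + f x)) s := by
  intro x hx y hy hxy
  have hfx := hf0 x hx
  have hgx := hg0 x hx
  have hgy := hg0 y hy
  have hfxy := hf hx hy hxy
  have hgxy := hg hx hy hxy
  rw [div_lt_div_iff₀ (by linarith) (by linarith)]
  nlinarith [mul_le_mul_of_nonneg_left hgxy.le hfx, mul_lt_mul_of_pos_right hfxy hgx]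

lemma Ps_eq_one_sub (n : ℕ) (σ θ ν : ℝ) :
    Ps n σ θ ν = 1 - (Phi (√n / σ * θ + √n / σ * ν) - Phi (√n / σ * θ - √n / σ * ν)) := by
  rw [Ps, show √n * (-θ - ν) / σ = -(√n / σ * θ + √n / σ * ν) by ring, Phi_neg,
    show √n * (θ - ν) / σ = √n / σ * θ - √n / σ * ν by ring]
  ring

lemma Ps_pos (n : ℕ) (σ θ ν : ℝ) : 0 < Ps n σ θ ν :=
  add_pos (Phi_pos _) (Phi_pos _)

section CRb

variable {n : ℕ} {σ α za θ ν : ℝ}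

lemma Ps_strictMonoOn (hn : 0 < n) (hσ : 0 < σ) (hν : 0 < ν) :
    StrictMonoOn (fun θ => Ps n σ θ ν) (Ici 0) := by
  have hk : 0 < √n / σ := div_pos (sqrt_pos.2 (Nat.cast_pos.2 hn)) hσ
  intro x hx y hy hxy
  have := strictAntiOn_Phi_add_sub_Phi_sub (mul_pos hk hν)
    (mem_Ici.2 (mul_nonneg hk.le hx)) (mem_Ici.2 (mul_nonneg hk.le hy))
    (mul_lt_mul_of_pos_left hxy hk)
  simp only [Ps_eq_one_sub n σ _ ν]
  linarith

lemma sqrt_mul_mul_div_sqrt_div (hn : 0 < n) (hσ : σ ≠ 0) : √n * (za * σ / √n) / σ = za := by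
  have : √n ≠ 0 := (sqrt_pos.2 (Nat.cast_pos.2 hn)).ne'
  field_simp

lemma CRb_eq_Ps_sub (hn : 0 < n) (hσ : σ ≠ 0) (hza : Phi (-za) = α / 2) (hν : 0 ≤ ν)
    (hνc : ν < za * σ / √n) (hθ : θ ≤ za * σ / √n - ν) :
    CRb n σ α za θ ν = Ps n σ θ ν - α := by
  rw [CRb, abs_sub_comm, abs_of_pos (sub_pos.2 hνc), if_pos hνc, mul_one]
  split_ifs with hlt hle
  · rfl
  · obtain rfl : θ = za * σ / √n - ν := le_antisymm hθ (not_lt.1 hlt)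
    rw [Ps, show -(za * σ / √n - ν) - ν = -(za * σ / √n) by ring, mul_neg, neg_div,
      sqrt_mul_mul_div_sqrt_div hn hσ, hza,
      show √n * (ν - (za * σ / √n - ν)) / σ = -(√n * (za * σ / √n - ν - ν) / σ) by ring, Phi_neg]
    ring
  · exact absurd (hθ.trans (by linarith)) hle

lemma CRb_eq_zero (hn : 0 < n) (hσ : σ ≠ 0) (hza : Phi (-za) = α / 2)
    (hc : 0 ≤ za * σ / √n) (hνc : za * σ / √n ≤ ν) (hθ : θ ≤ ν - za * σ / √n) :
    CRb n σ α za θ ν = 0 := by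
  rw [CRb, abs_of_nonneg (sub_nonneg.2 hνc), if_neg (not_lt.2 hνc), mul_zero]
  split_ifs with hlt hle
  · rfl
  · obtain rfl : θ = ν - za * σ / √n := le_antisymm hθ (not_lt.1 hlt)
    rw [sub_sub_cancel, sqrt_mul_mul_div_sqrt_div hn hσ]
    linarith [Phi_neg za]
  · exact absurd (hθ.trans (by linarith)) hle

lemma CRb_eq_Phi_sub (hθ : θ ∈ Icc |ν - za * σ / √n| (ν + za * σ / √n)) :
    CRb n σ α za θ ν = Phi (√n * (θ - ν) / σ) - α / 2 := by
  rw [CRb, if_neg (not_lt.2 hθ.1), if_pos hθ.2,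
    show √n * (ν - θ) / σ = -(√n * (θ - ν) / σ) by ring, Phi_neg]
  ring

lemma CRb_eq_one_sub (hn : 0 < n) (hσ : σ ≠ 0) (hza : Phi (-za) = α / 2) (hν : 0 ≤ ν)
    (hc : 0 ≤ za * σ / √n) (hθ : ν + za * σ / √n ≤ θ) :
    CRb n σ α za θ ν = 1 - α := by
  have habs : |ν - za * σ / √n| ≤ ν + za * σ / √n := abs_sub_le_iff.2 ⟨by linarith, by linarith⟩
  rw [CRb, if_neg (not_lt.2 (habs.trans hθ))]
  split_ifs with hle
  · obtain rfl : θ = ν + za * σ / √n := le_antisymm hle hθ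
    rw [show ν - (ν + za * σ / √n) = -(za * σ / √n) by ring, mul_neg, neg_div,
      sqrt_mul_mul_div_sqrt_div hn hσ, hza]
    ring
  · rfl

lemma CRb_div_Ps_monotoneOn (hn : 0 < n) (hσ : 0 < σ) (hα : 0 ≤ α) (hza : Phi (-za) = α / 2)
    (hν : 0 < ν) (hc : 0 ≤ za * σ / √n) :
    MonotoneOn (fun θ => CRb n σ α za θ ν / Ps n σ θ ν) (Icc 0 |ν - za * σ / √n|) := by
  rcases lt_or_ge ν (za * σ / √n) with hνc | hcν
  · rw [abs_sub_comm, abs_of_pos (sub_pos.2 hνc)]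
    intro x hx y hy hxy
    simp only [CRb_eq_Ps_sub hn hσ.ne' hza hν.le hνc hx.2,
      CRb_eq_Ps_sub hn hσ.ne' hza hν.le hνc hy.2, sub_div, div_self (Ps_pos n σ _ ν).ne']
    gcongr 1 - ?_
    exact div_le_div_of_nonneg_left hα (Ps_pos n σ x ν)
      ((Ps_strictMonoOn hn hσ hν).monotoneOn hx.1 hy.1 hxy)
  · rw [abs_of_nonneg (sub_nonneg.2 hcν)]
    intro x hx y hy _
    simp only [CRb_eq_zero hn hσ.ne' hza hc hcν hx.2, CRb_eq_zero hn hσ.ne' hza hc hcν hy.2,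
      zero_div, le_refl]

lemma CRb_div_Ps_strictMonoOn (hn : 0 < n) (hσ : 0 < σ) (hα : 0 ≤ α) (hza : Phi (-za) = α / 2) :
    StrictMonoOn (fun θ => CRb n σ α za θ ν / Ps n σ θ ν)
      (Ioo |ν - za * σ / √n| (ν + za * σ / √n)) := by
  have hsn : 0 < √n := sqrt_pos.2 (Nat.cast_pos.2 hn)
  have hb : StrictMono fun θ => Phi (√n * (θ - ν) / σ) - α / 2 := fun x y hxy => by
    have := Phi_strictMono (show √n * (x - ν) / σ < √n * (y - ν) / σ by gcongr)
    linarith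
  have ha : StrictAnti fun θ => Phi (√n * (-θ - ν) / σ) + α / 2 := fun x y hxy => by
    have := Phi_strictMono (show √n * (-y - ν) / σ < √n * (-x - ν) / σ by gcongr)
    linarith
  have hb0 : ∀ θ ∈ Ioo |ν - za * σ / √n| (ν + za * σ / √n),
      0 ≤ Phi (√n * (θ - ν) / σ) - α / 2 := fun θ hθ => by
    have hz : -za = √n * -(za * σ / √n) / σ := by
      rw [mul_neg, neg_div, sqrt_mul_mul_div_sqrt_div hn hσ.ne']
    have := Phi_strictMono (show -za < √n * (θ - ν) / σ by
      rw [hz]; gcongr; linarith [le_abs_self (ν - za * σ / √n), hθ.1])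
    linarith
  refine ((hb.strictMonoOn _).div_add_of_strictAntiOn (ha.strictAntiOn _) hb0
    fun θ _ => by positivity [Phi_pos (√n * (-θ - ν) / σ)]).congr fun θ hθ => ?_
  rw [CRb_eq_Phi_sub (Ioo_subset_Icc_self hθ), Ps]
  ring

lemma CRb_div_Ps_strictAntiOn (hn : 0 < n) (hσ : 0 < σ) (hα : α < 1) (hza : Phi (-za) = α / 2)
    (hν : 0 < ν) (hc : 0 ≤ za * σ / √n) :
    StrictAntiOn (fun θ => CRb n σ α za θ ν / Ps n σ θ ν) (Ici (ν + za * σ / √n)) := by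
  intro x hx y hy hxy
  have hx0 : x ∈ Ici 0 := mem_Ici.2 (by linarith [mem_Ici.1 hx])
  have hy0 : y ∈ Ici 0 := mem_Ici.2 (by linarith [mem_Ici.1 hy])
  simp only [CRb_eq_one_sub hn hσ.ne' hza hν.le hc hx, CRb_eq_one_sub hn hσ.ne' hza hν.le hc hy]
  exact div_lt_div_of_pos_left (sub_pos.2 hα) (Ps_pos n σ x ν)
    (Ps_strictMonoOn hn hσ hν hx0 hy0 hxy)

end CRb

/-- Monotonicity of CR_b/P_s: for a fixed ν > 0, the function
G(θ) = CR_b(θ,ν)/P_s(θ,ν) is non-decreasing on [0, |ν − z_{α/2}σ/√n|], strictly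
increasing on (|ν − z_{α/2}σ/√n|, ν + z_{α/2}σ/√n), and strictly decreasing on
[ν + z_{α/2}σ/√n, ∞). -/
theorem CRb_over_Ps_monotone (n : ℕ) (hn : 1 ≤ n) (σ α za ν : ℝ)
    (hσ : 0 < σ) (hα : α ∈ Set.Ioo (0:ℝ) 1)
    (hza : Phi (-za) = α / 2) (hν : 0 < ν) :
    MonotoneOn (fun θ : ℝ => CRb n σ α za θ ν / Ps n σ θ ν)
      (Set.Icc 0 |ν - za * σ / Real.sqrt n|) ∧
    StrictMonoOn (fun θ : ℝ => CRb n σ α za θ ν / Ps n σ θ ν)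
      (Set.Ioo |ν - za * σ / Real.sqrt n| (ν + za * σ / Real.sqrt n)) ∧
    StrictAntiOn (fun θ : ℝ => CRb n σ α za θ ν / Ps n σ θ ν)
      (Set.Ici (ν + za * σ / Real.sqrt n)) := by
  have hza0 : 0 < za := pos_of_Phi_neg_lt_half (by linarith [hα.2])
  have hc : 0 ≤ za * σ / √n := by positivity
  exact ⟨CRb_div_Ps_monotoneOn hn hσ hα.1.le hza hν hc,
    CRb_div_Ps_strictMonoOn hn hσ hα.1.le hza,
    CRb_div_Ps_strictAntiOn hn hσ hα.2 hza hν hc⟩
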